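/- arXiv:1607.03471 — 2 statements merged into one kernel-verified Lean document; each statement's English description precedes it below -/
import Mathlib

section
/- Let k ≥ 1. If the cop at vertex c has k-cornered the robber at vertex r₀, then for every robber move r₁ ∈ N[r₀] there exists a cop move c₁ ∈ N[c] such that r₁ is (k−1)-cornered by c₁. -/
open Classical

/-- A finite reflexive graph: adjacency is symmetric and every vertex is
adjacent to itself (closed neighborhood `N[v] = {u | Adj v u}`). -/
structure RefGraph (V : Type*) where
  Adj : V → V → Prop
  symm : ∀ u v, Adj u v → Adj v u
  refl : ∀ v, Adj v v

namespace RefGraph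

variable {V : Type*}

/-- `w` strictly corners `v` within the induced subgraph on `S`,
i.e. `N_S[v] ⊊ N_S[w]`. -/
def StrictCornersIn (G : RefGraph V) (S : Set V) (w v : V) : Prop :=
  w ∈ S ∧ v ∈ S ∧ (∀ u ∈ S, G.Adj v u → G.Adj w u) ∧ ∃ u ∈ S, G.Adj w u ∧ ¬ G.Adj v u

/-- `v` is a strict corner of the induced subgraph on `S`. -/
def IsStrictCorner (G : RefGraph V) (S : Set V) (v : V) : Prop :=
  ∃ w, G.StrictCornersIn S w v

/-- `S` induces a clique. -/
def IsCliqueSet (G : RefGraph V) (S : Set V) : Prop :=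
  ∀ u ∈ S, ∀ v ∈ S, G.Adj u v

/-- `lvl k` is the vertex set of the graph `G_{k+1}` of the corner ranking
procedure: start with all vertices and repeatedly delete all strict corners. -/
def lvl (G : RefGraph V) : ℕ → Set V
  | 0 => Set.univ
  | k + 1 => {v ∈ G.lvl k | ¬ G.IsStrictCorner (G.lvl k) v}

/-- The corner rank of a vertex: the stage (1-indexed) at which it is a strict
corner, or at which the remaining graph is a clique; `∞` if neither ever occurs. -/
noncomputable def cr (G : RefGraph V) (v : V) : ℕ∞ :=
  sInf {n : ℕ∞ | ∃ m : ℕ, n = (m : ℕ∞) + 1 ∧ v ∈ G.lvl m ∧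
    (G.IsStrictCorner (G.lvl m) v ∨ G.IsCliqueSet (G.lvl m))}

/-- The vertex set of `Gₖ`: the vertices of corner rank at least `k`. -/
def GkSet (G : RefGraph V) (k : ℕ) : Set V := {v | (k : ℕ∞) ≤ G.cr v}

/-- The corner rank of the graph: the largest corner rank of a vertex. -/
noncomputable def crGraph (G : RefGraph V) [Fintype V] : ℕ∞ :=
  Finset.univ.sup fun v => G.cr v

/-- The projection map `fₖ` on a single vertex `u` of `Gₖ`. -/
noncomputable def fk (G : RefGraph V) (k : ℕ) (u : V) : Set V :=
  if (k : ℕ∞) < G.cr u then {u}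
  else {w | w ∈ G.GkSet (k + 1) ∧ G.StrictCornersIn (G.GkSet k) w u}

/-- The projection map `Fₖ`: `F₁` is the identity and `Fₖ₊₁ = fₖ ∘ Fₖ`. -/
noncomputable def Fk (G : RefGraph V) : ℕ → V → Set V
  | 0, v => {v}
  | 1, v => {v}
  | k + 2, v => ⋃ u ∈ G.Fk (k + 1) v, G.fk (k + 1) u

/-- `r` is `k`-cornered by `c`: for `k = 0`, `c = r`; for `k ≥ 1`, some
`r' ∈ Fₖ(r)` is cornered by `c` in the subgraph induced by `V(Gₖ) ∪ {c}`. -/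
def kCornered (G : RefGraph V) : ℕ → V → V → Prop
  | 0, c, r => c = r
  | k + 1, c, r => ∃ r' ∈ G.Fk (k + 1) r,
      ∀ u, (u ∈ G.GkSet (k + 1) ∨ u = c) → G.Adj r' u → G.Adj c u

/-- With the cop at `c`, the vertex `r` is `k`-proj-safe: `cr r ≥ k` and some
`c' ∈ Fₖ(c)` is not adjacent to `r`. -/
def ProjSafe (G : RefGraph V) (k : ℕ) (c r : V) : Prop :=
  (k : ℕ∞) ≤ G.cr r ∧ ∃ c' ∈ G.Fk k c, ¬ G.Adj c' r

/-- The cop at `c` can win within `k` cop moves against the robber at `r`,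
robber to move. -/
def WinWithin (G : RefGraph V) : ℕ → V → V → Prop
  | 0, c, r => c = r
  | k + 1, c, r => c = r ∨ ∀ r₁, G.Adj r r₁ → ∃ c₁, G.Adj c c₁ ∧ G.WinWithin k c₁ r₁

/-- The cop at `c` can guarantee catching the robber at `r` within `n` cop
moves, cop to move. -/
def CanCatch (G : RefGraph V) : ℕ → V → V → Prop
  | 0, c, r => c = r
  | n + 1, c, r => c = r ∨ ∃ c', G.Adj c c' ∧
      (c' = r ∨ ∀ r', G.Adj r r' → G.CanCatch n c' r')

/-- The cop has a winning strategy: some initial placement from which she can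
guarantee capture in some bounded number of moves, whatever the robber does. -/
def CopWin (G : RefGraph V) : Prop :=
  ∃ (n : ℕ) (c₀ : V), ∀ r₀ : V, G.CanCatch n c₀ r₀

/-- The capture time: the least `n` such that the cop has an initial placement
guaranteeing capture within `n` cop moves. -/
noncomputable def capt (G : RefGraph V) : ℕ :=
  sInf {n : ℕ | ∃ c₀ : V, ∀ r₀ : V, G.CanCatch n c₀ r₀}

/-- A graph of finite corner rank `α` is `1`-cop-win if some vertex of corner
rank `α` is adjacent to every vertex of `G_{α-1}`. -/
def OneCopWin (G : RefGraph V) (α : ℕ) : Prop :=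
  ∃ x, G.cr x = (α : ℕ∞) ∧ ∀ u, ((α - 1 : ℕ) : ℕ∞) ≤ G.cr u → G.Adj x u

/-- `r`-cop-win for `r ∈ {0,1}`. -/
def RCopWin (G : RefGraph V) (r α : ℕ) : Prop :=
  (r = 1 ∧ G.OneCopWin α) ∨ (r = 0 ∧ ¬ G.OneCopWin α)

/-- The largest finite corner rank occurring in `G` (0 if none occurs). -/
noncomputable def gammaMax (G : RefGraph V) : ℕ :=
  sSup {n : ℕ | ∃ v, G.cr v = (n : ℕ∞)}

/-- `F_∞`: equal to `F_{γ+1}` where `γ` is the largest finite corner rank, and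
the identity (`F₁`) when no vertex has finite corner rank. -/
noncomputable def Finf (G : RefGraph V) : V → Set V :=
  G.Fk (G.gammaMax + 1)

/-- `e` lists the vertices as a dismantling ordering: every vertex except the
last is cornered, in the induced subgraph on it and the later vertices, by some
later vertex. -/
def IsDismantlingOrdering (G : RefGraph V) {n : ℕ} (e : Fin n ≃ V) : Prop :=
  ∀ i : Fin n, (i : ℕ) + 1 < n →
    ∃ j : Fin n, i < j ∧ e j ≠ e i ∧
      ∀ u, (∃ m : Fin n, i ≤ m ∧ e m = u) → G.Adj (e i) u → G.Adj (e j) u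

/-- `G` has a dismantling ordering. -/
def HasDismantling (G : RefGraph V) [Fintype V] : Prop :=
  ∃ e : Fin (Fintype.card V) ≃ V, G.IsDismantlingOrdering e

end RefGraph

namespace RefGraph

variable {V : Type*}

lemma lvl_succ_subset (G : RefGraph V) (m : ℕ) : G.lvl (m+1) ⊆ G.lvl m :=
  fun _ hv => hv.1

lemma lvl_subset (G : RefGraph V) {m m' : ℕ} (h : m ≤ m') : G.lvl m' ⊆ G.lvl m := by
  induction h with
  | refl => exact fun _ h => h
  | step _ ih => exact fun v hv => ih (G.lvl_succ_subset _ hv)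

lemma cr_le_of_witness (G : RefGraph V) {v : V} {m : ℕ} (h1 : v ∈ G.lvl m)
    (h2 : G.IsStrictCorner (G.lvl m) v ∨ G.IsCliqueSet (G.lvl m)) :
    G.cr v ≤ (m : ℕ∞) + 1 :=
  sInf_le ⟨m, rfl, h1, h2⟩

lemma le_cr (G : RefGraph V) {v : V} {a : ℕ∞}
    (h : ∀ m : ℕ, v ∈ G.lvl m →
      (G.IsStrictCorner (G.lvl m) v ∨ G.IsCliqueSet (G.lvl m)) → a ≤ (m : ℕ∞) + 1) :
    a ≤ G.cr v :=
  le_sInf (by rintro b ⟨m, rfl, h1, h2⟩; exact h m h1 h2)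

lemma one_le_cr (G : RefGraph V) (v : V) : 1 ≤ G.cr v :=
  G.le_cr fun _ _ _ => le_add_self

lemma mem_GkSet_one (G : RefGraph V) (v : V) : v ∈ G.GkSet 1 := by
  have := G.one_le_cr v
  simpa [GkSet] using this

lemma GkSet_subset (G : RefGraph V) {k k' : ℕ} (h : k ≤ k') : G.GkSet k' ⊆ G.GkSet k := by
  intro v hv
  have hc : ((k : ℕ) : ℕ∞) ≤ ((k' : ℕ) : ℕ∞) := by exact_mod_cast h
  exact le_trans hc hv

lemma cr_le_of_notMem_lvl (G : RefGraph V) {v : V} :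
    ∀ {m : ℕ}, v ∉ G.lvl m → G.cr v ≤ (m : ℕ∞)
  | 0, h => absurd (Set.mem_univ v) h
  | m+1, h => by
      by_cases hm : v ∈ G.lvl m
      · have hs : G.IsStrictCorner (G.lvl m) v := by
          by_contra hns; exact h ⟨hm, hns⟩
        exact_mod_cast G.cr_le_of_witness hm (Or.inl hs)
      · exact le_trans (G.cr_le_of_notMem_lvl hm) (by exact_mod_cast Nat.le_succ m)

lemma cr_le_of_clique (G : RefGraph V) {m : ℕ} (hc : G.IsCliqueSet (G.lvl m)) (v : V) :
    G.cr v ≤ (m : ℕ∞) + 1 := by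
  by_cases hv : v ∈ G.lvl m
  · exact G.cr_le_of_witness hv (Or.inr hc)
  · exact le_trans (G.cr_le_of_notMem_lvl hv) le_self_add

lemma le_cr_of_mem_lvl (G : RefGraph V) {m : ℕ}
    (hx : ∃ x : V, (m : ℕ∞) + 1 + 1 ≤ G.cr x)
    {p : ℕ} (hp : p ≤ m + 1) {v : V} (hv : v ∈ G.lvl p) : (p : ℕ∞) + 1 ≤ G.cr v := by
  refine G.le_cr fun m' h1 h2 => ?_
  suffices h : p ≤ m' by exact_mod_cast Nat.succ_le_succ h
  by_contra hlt
  push_neg at hlt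
  rcases h2 with hs | hcq
  · exact (G.lvl_subset hlt hv).2 hs
  · obtain ⟨x, hxc⟩ := hx
    have h3 := G.cr_le_of_clique hcq x
    have h4 : (m : ℕ∞) + 1 + 1 ≤ (m' : ℕ∞) + 1 := le_trans hxc h3
    have h5 : m + 1 + 1 ≤ m' + 1 := by exact_mod_cast h4
    omega

lemma fk_spec (G : RefGraph V) {k : ℕ} {u w : V} (h : w ∈ G.fk k u) :
    w ∈ G.GkSet (k+1) ∧ ∀ x ∈ G.GkSet k, G.Adj u x → G.Adj w x := by
  unfold fk at h
  split_ifs at h with hcr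
  · simp only [Set.mem_singleton_iff] at h
    subst h
    refine ⟨?_, fun x _ hx => hx⟩
    show ((k+1 : ℕ) : ℕ∞) ≤ G.cr w
    have : (k : ℕ∞) + 1 ≤ G.cr w := Order.add_one_le_of_lt hcr
    exact_mod_cast this
  · exact ⟨h.1, h.2.2.2.1⟩

lemma Fk_mem_GkSet (G : RefGraph V) :
    ∀ {k : ℕ}, 1 ≤ k → ∀ {v w : V}, w ∈ G.Fk k v → w ∈ G.GkSet k
  | 0, hk, _, _, _ => absurd hk (by omega)
  | 1, _, v, w, h => by
      exact G.mem_GkSet_one w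
  | k+2, _, v, w, h => by
      simp only [Fk, Set.mem_iUnion] at h
      obtain ⟨u, _, hw⟩ := h
      exact (G.fk_spec hw).1

lemma exists_strict_cornerer (G : RefGraph V) [Fintype V] {j : ℕ} {y : V}
    (hy : G.cr y = (j : ℕ∞)) (hx : ∃ x : V, (j : ℕ∞) + 1 ≤ G.cr x) :
    ∃ w, w ∈ G.GkSet (j+1) ∧ G.StrictCornersIn (G.GkSet j) w y := by
  classical
  have hTne : {m : ℕ | y ∈ G.lvl m ∧
      (G.IsStrictCorner (G.lvl m) y ∨ G.IsCliqueSet (G.lvl m))}.Nonempty := by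
    by_contra hne
    rw [Set.not_nonempty_iff_eq_empty] at hne
    have hS : {n : ℕ∞ | ∃ m : ℕ, n = (m : ℕ∞) + 1 ∧ y ∈ G.lvl m ∧
        (G.IsStrictCorner (G.lvl m) y ∨ G.IsCliqueSet (G.lvl m))} = ∅ := by
      ext n
      simp only [Set.mem_setOf_eq, Set.mem_empty_iff_false, iff_false]
      rintro ⟨m, rfl, h1, h2⟩
      exact Set.eq_empty_iff_forall_notMem.mp hne m ⟨h1, h2⟩
    have : G.cr y = ⊤ := by rw [cr, hS, sInf_empty]
    rw [hy] at this
    exact (ENat.coe_ne_top j) this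
  set m := sInf {m : ℕ | y ∈ G.lvl m ∧
      (G.IsStrictCorner (G.lvl m) y ∨ G.IsCliqueSet (G.lvl m))} with hm
  have hmT := Nat.sInf_mem hTne
  rw [← hm] at hmT
  obtain ⟨hym, hsc⟩ := hmT
  have hcrm : G.cr y = (m : ℕ∞) + 1 := by
    refine le_antisymm (G.cr_le_of_witness hym hsc) (G.le_cr ?_)
    intro m' h1 h2
    have hmm : m ≤ m' := Nat.sInf_le ⟨h1, h2⟩
    exact_mod_cast Nat.succ_le_succ hmm
  have hjm : j = m + 1 := by
    rw [hy] at hcrm; exact_mod_cast hcrm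
  subst hjm
  have hx2 : ∃ x : V, (m : ℕ∞) + 1 + 1 ≤ G.cr x := by
    obtain ⟨x, hxc⟩ := hx
    exact ⟨x, by exact_mod_cast hxc⟩
  have hclique : ¬ G.IsCliqueSet (G.lvl m) := by
    intro hc
    obtain ⟨x, hxc⟩ := hx2
    have h3 := G.cr_le_of_clique hc x
    have h4 : (m : ℕ∞) + 1 + 1 ≤ (m : ℕ∞) + 1 := le_trans hxc h3
    have h5 : m + 1 + 1 ≤ m + 1 := by exact_mod_cast h4
    omega
  obtain ⟨w₀, hw₀⟩ : G.IsStrictCorner (G.lvl m) y := hsc.resolve_right hclique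
  have hset : G.GkSet (m+1) = G.lvl m := by
    ext v
    simp only [GkSet, Set.mem_setOf_eq]
    constructor
    · intro hv
      by_contra hnv
      have h6 := G.cr_le_of_notMem_lvl hnv
      have h7 : ((m+1 : ℕ) : ℕ∞) ≤ (m : ℕ∞) := le_trans hv h6
      have : m + 1 ≤ m := by exact_mod_cast h7
      omega
    · intro hv
      have := G.le_cr_of_mem_lvl hx2 (Nat.le_succ m) hv
      exact_mod_cast this
  -- pick a strict cornerer of y with maximal closed neighborhood in lvl m
  obtain ⟨w, hwC, hwmax⟩ := Finset.exists_max_image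
    (Finset.univ.filter (fun w => G.StrictCornersIn (G.lvl m) w y))
    (fun w => (Finset.univ.filter (fun u => u ∈ G.lvl m ∧ G.Adj w u)).card)
    ⟨w₀, by simp [hw₀]⟩
  have hw : G.StrictCornersIn (G.lvl m) w y := by
    simpa using hwC
  have hns : ¬ G.IsStrictCorner (G.lvl m) w := by
    rintro ⟨w', hw'⟩
    obtain ⟨hw'1, _, hw'3, u, hu, hu1, hu2⟩ := hw'
    have hc' : G.StrictCornersIn (G.lvl m) w' y :=
      ⟨hw'1, hw.2.1, fun z hz hadj => hw'3 z hz (hw.2.2.1 z hz hadj),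
        u, hu, hu1, fun hy' => hu2 (hw.2.2.1 u hu hy')⟩
    have hle := hwmax w' (by simp [hc'])
    have hsub : (Finset.univ.filter (fun z => z ∈ G.lvl m ∧ G.Adj w z)) ⊆
        Finset.univ.filter (fun z => z ∈ G.lvl m ∧ G.Adj w' z) := by
      intro z hz
      simp only [Finset.mem_filter, Finset.mem_univ, true_and] at hz ⊢
      exact ⟨hz.1, hw'3 z hz.1 hz.2⟩
    have hss := (Finset.ssubset_iff_of_subset hsub).2
      ⟨u, by simp only [Finset.mem_filter, Finset.mem_univ, true_and]; exact ⟨hu, hu1⟩,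
        by simp only [Finset.mem_filter, Finset.mem_univ, true_and, not_and]
           exact fun _ => hu2⟩
    have hlt := Finset.card_lt_card hss
    omega
  have hwlvl : w ∈ G.lvl (m+1) := ⟨hw.1, hns⟩
  have hcrw := G.le_cr_of_mem_lvl hx2 le_rfl hwlvl
  refine ⟨w, ?_, ?_⟩
  · show ((m+1+1 : ℕ) : ℕ∞) ≤ G.cr w
    exact_mod_cast hcrw
  · rw [hset]; exact hw

lemma fk_nonempty (G : RefGraph V) [Fintype V] {j : ℕ} {u : V}
    (hu : u ∈ G.GkSet j) (hx : ∃ x, x ∈ G.GkSet (j+1)) :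
    (G.fk j u).Nonempty := by
  by_cases hc : (j : ℕ∞) < G.cr u
  · refine ⟨u, ?_⟩
    unfold fk
    rw [if_pos hc]
    exact rfl
  · have hcr : G.cr u = (j : ℕ∞) := le_antisymm (not_lt.1 hc) hu
    have hx' : ∃ x, (j : ℕ∞) + 1 ≤ G.cr x := by
      obtain ⟨x, hxm⟩ := hx
      exact ⟨x, by exact_mod_cast hxm⟩
    obtain ⟨w, h1, h2⟩ := G.exists_strict_cornerer hcr hx'
    refine ⟨w, ?_⟩
    unfold fk
    rw [if_neg hc]
    exact ⟨h1, h2⟩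

lemma move_lemma (G : RefGraph V) [Fintype V] :
    ∀ (i : ℕ) {x y x' : V}, G.Adj x y → x' ∈ G.Fk (i+2) x →
      ∃ y' ∈ G.Fk (i+1) y, G.Adj x' y' := by
  intro i
  induction i with
  | zero =>
    intro x y x' hadj hx'
    simp only [Fk, Set.mem_iUnion, Set.mem_singleton_iff] at hx'
    obtain ⟨u, rfl, hw⟩ := hx'
    have spec := G.fk_spec hw
    exact ⟨y, by simp [Fk], spec.2 y (G.mem_GkSet_one y) hadj⟩
  | succ i ih =>
    intro x y x' hadj hx'
    simp only [Fk, Set.mem_iUnion] at hx'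
    obtain ⟨x₁, hx₁, hw⟩ := hx'
    have hx₁' : x₁ ∈ G.Fk (i+2) x := by
      simp only [Fk, Set.mem_iUnion]
      exact hx₁
    obtain ⟨y₁, hy₁, hadj1⟩ := ih hadj hx₁'
    have hy₁G : y₁ ∈ G.GkSet (i+1) := G.Fk_mem_GkSet (by omega) hy₁
    have hx₁G : x₁ ∈ G.GkSet (i+2) := G.Fk_mem_GkSet (by omega) hx₁'
    obtain ⟨y', hy'⟩ := G.fk_nonempty hy₁G ⟨x₁, hx₁G⟩
    have spec := G.fk_spec hy'
    have h1 : G.Adj y' x₁ := spec.2 x₁ (G.GkSet_subset (Nat.le_succ _) hx₁G) (G.symm _ _ hadj1)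
    have specx := G.fk_spec hw
    have h2 : G.Adj x' y' := specx.2 y' spec.1 (G.symm _ _ h1)
    refine ⟨y', ?_, h2⟩
    simp only [Fk, Set.mem_iUnion]
    exact ⟨y₁, hy₁, hy'⟩

end RefGraph

/-- For `k ≥ 1`, if the cop at `c` has `k`-cornered the robber at
`r₀`, then for every robber move `r₁ ∈ N[r₀]` there is a cop move `c₁ ∈ N[c]`
such that `r₁` is `(k-1)`-cornered by `c₁`. -/
theorem k_cornered_to_k_sub_one_cornered
    {V : Type*} [Fintype V] [Nonempty V] (G : RefGraph V)
    (k : ℕ) (hk : 1 ≤ k) (c r₀ : V) (h : G.kCornered k c r₀) :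
    ∀ r₁ : V, G.Adj r₀ r₁ → ∃ c₁ : V, G.Adj c c₁ ∧ G.kCornered (k - 1) c₁ r₁ := by
  obtain ⟨j, rfl⟩ : ∃ j, k = j + 1 := ⟨k - 1, by omega⟩
  intro r₁ hadj
  cases j with
  | zero =>
    obtain ⟨r', hr', hC⟩ := h
    simp only [RefGraph.Fk, Set.mem_singleton_iff] at hr'
    subst hr'
    refine ⟨r₁, hC r₁ (Or.inl (G.mem_GkSet_one r₁)) hadj, ?_⟩
    rfl
  | succ n =>
    obtain ⟨r', hr'F, hC⟩ := h
    obtain ⟨r'', hr''F, hadj'⟩ := G.move_lemma n hadj hr'F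
    have hr''G : r'' ∈ G.GkSet (n+1) := G.Fk_mem_GkSet (by omega) hr''F
    have hr'G : r' ∈ G.GkSet (n+2) := G.Fk_mem_GkSet (by omega) hr'F
    obtain ⟨w, hwf⟩ := G.fk_nonempty hr''G ⟨r', hr'G⟩
    have spec := G.fk_spec hwf
    have h1 : G.Adj w r' := spec.2 r' (G.GkSet_subset (Nat.le_succ _) hr'G) (G.symm _ _ hadj')
    have h2 : G.Adj c w := hC w (Or.inl spec.1) (G.symm _ _ h1)
    refine ⟨w, h2, ?_⟩
    show G.kCornered (n+1+1-1) w r₁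
    have hred : n+1+1-1 = n+1 := rfl
    rw [hred]
    exact ⟨r'', hr''F, fun u hu hau =>
      hu.elim (fun hm => spec.2 u hm hau) (fun he => by rw [he]; exact G.refl w)⟩
end

section
/- Let G be a graph of corner rank ∞. Then for every vertex c of G there exists a vertex r with cr(r) = ∞ such that some c' ∈ F_∞(c) is not adjacent to r (i.e. an ∞-proj-safe vertex exists no matter where the cop stands). -/
open Classical

/-!
If some vertex has infinite corner rank, no stage of the corner ranking is a clique, so a vertex
of `Gₖ₊₁` either survives to `Gₖ₊₂` or is strictly cornered in `Gₖ₊₁` by a vertex that is not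
itself a strict corner there (a cornerer with the largest neighbourhood). Hence every `Fₖ₊₁(c)` is
a nonempty subset of `Gₖ₊₁`, and `F_∞(c)` consists of vertices of infinite rank. These form the
stable core of the procedure: it has no strict corners and is not a clique, while a core vertex
adjacent to the whole core would strictly corner an endpoint of any non-edge.
-/

namespace RefGraph

variable {V : Type*}

section Corners

variable {G : RefGraph V} {S : Set V} {u v w : V}

lemma StrictCornersIn.trans (hwv : G.StrictCornersIn S w v) (hvu : G.StrictCornersIn S v u) :
    G.StrictCornersIn S w u :=
  let ⟨hw, _, hvw, _⟩ := hwv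
  let ⟨_, hu, huv, x, hx, hvx, hux⟩ := hvu
  ⟨hw, hu, fun y hy huy => hvw y hy (huv y hy huy), x, hx, hvw x hx hvx, hux⟩

lemma StrictCornersIn.ncard_lt [Finite V] (hwv : G.StrictCornersIn S w v) :
    {x ∈ S | G.Adj v x}.ncard < {x ∈ S | G.Adj w x}.ncard := by
  obtain ⟨-, -, hvw, x, hx, hwx, hvx⟩ := hwv
  refine Set.ncard_lt_ncard ⟨fun y ⟨hy, hvy⟩ => ⟨hy, hvw y hy hvy⟩, fun hsub => ?_⟩
  exact hvx (hsub ⟨hx, hwx⟩).2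

lemma exists_strictCornersIn_not_isStrictCorner [Finite V] (hv : G.IsStrictCorner S v) :
    ∃ w, G.StrictCornersIn S w v ∧ ¬ G.IsStrictCorner S w := by
  obtain ⟨w, hwv, hmax⟩ := Set.Finite.exists_maximalFor (fun w => {x ∈ S | G.Adj w x}.ncard)
    {w | G.StrictCornersIn S w v} (Set.toFinite _) hv
  refine ⟨w, hwv, fun ⟨w', hw'w⟩ => ?_⟩
  exact hw'w.ncard_lt.not_ge (hmax (hw'w.trans hwv) hw'w.ncard_lt.le)

end Corners

variable (G : RefGraph V)

lemma lvl_antitone : Antitone G.lvl :=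
  antitone_nat_of_succ_le fun _ _ hv => hv.1

lemma GkSet_antitone : Antitone G.GkSet :=
  fun _ _ hjk v (hv : _ ≤ G.cr v) => (Nat.cast_le.mpr hjk).trans hv

lemma cr_le_add_one {v : V} {m : ℕ} (hv : v ∈ G.lvl m)
    (h : G.IsStrictCorner (G.lvl m) v ∨ G.IsCliqueSet (G.lvl m)) : G.cr v ≤ m + 1 :=
  sInf_le ⟨m, rfl, hv, h⟩

lemma GkSet_succ_subset_lvl (k : ℕ) : G.GkSet (k + 1) ⊆ G.lvl k := by
  induction k with
  | zero => exact Set.subset_univ _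
  | succ k ih =>
    intro v hv
    have hvk : v ∈ G.lvl k := ih (G.GkSet_antitone (k + 1).le_succ hv)
    refine ⟨hvk, fun hcorner => ?_⟩
    have hle := G.cr_le_add_one hvk (Or.inl hcorner)
    have hv' : ((k + 1 + 1 : ℕ) : ℕ∞) ≤ G.cr v := hv
    push_cast at hv'
    exact absurd (hv'.trans hle) (by norm_cast; omega)

lemma not_isCliqueSet_lvl {v : V} (hv : G.cr v = ⊤) (m : ℕ) : ¬ G.IsCliqueSet (G.lvl m) :=
  fun hclique => by
    have hvm : v ∈ G.lvl m := G.GkSet_succ_subset_lvl m (by simp [GkSet, hv])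
    have := G.cr_le_add_one hvm (Or.inr hclique)
    simp [hv] at this

lemma exists_cr_eq_top [Fintype V] (h : G.crGraph = ⊤) : ∃ v, G.cr v = ⊤ := by
  by_contra! hfin
  have : G.crGraph < ⊤ :=
    (Finset.sup_lt_iff bot_lt_top).mpr fun v _ => lt_top_iff_ne_top.mpr (hfin v)
  exact this.ne h

lemma lvl_subset_GkSet_succ (hnc : ∀ m, ¬ G.IsCliqueSet (G.lvl m)) (k : ℕ) :
    G.lvl k ⊆ G.GkSet (k + 1) := by
  intro v hv
  show _ ≤ G.cr v
  unfold cr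
  refine le_sInf ?_
  rintro _ ⟨m, rfl, -, hcorner | hclique⟩
  · have hmk : k ≤ m := by
      by_contra! hmk
      exact (G.lvl_antitone hmk hv).2 hcorner
    push_cast
    gcongr
  · exact absurd hclique (hnc m)

lemma GkSet_succ_eq_lvl (hnc : ∀ m, ¬ G.IsCliqueSet (G.lvl m)) (k : ℕ) :
    G.GkSet (k + 1) = G.lvl k :=
  (G.GkSet_succ_subset_lvl k).antisymm (G.lvl_subset_GkSet_succ hnc k)

lemma fk_subset_lvl (k : ℕ) (u : V) : G.fk (k + 1) u ⊆ G.lvl (k + 1) := by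
  unfold fk
  split_ifs with h
  · rintro w rfl
    refine G.GkSet_succ_subset_lvl (k + 1) ?_
    simpa [GkSet] using Order.add_one_le_of_lt h
  · exact fun w hw => G.GkSet_succ_subset_lvl (k + 1) hw.1

lemma fk_nonempty_s11 [Finite V] (hnc : ∀ m, ¬ G.IsCliqueSet (G.lvl m)) {k : ℕ} {u : V}
    (hu : u ∈ G.lvl k) : (G.fk (k + 1) u).Nonempty := by
  unfold fk
  split_ifs with h
  · exact Set.singleton_nonempty u
  · have hcorner : G.IsStrictCorner (G.lvl k) u := by
      by_contra hnot
      have hu' : ((k + 1 + 1 : ℕ) : ℕ∞) ≤ G.cr u := G.lvl_subset_GkSet_succ hnc (k + 1) ⟨hu, hnot⟩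
      exact h ((ENat.add_one_le_iff (ENat.natCast_ne_top _)).mp (by simpa using hu'))
    obtain ⟨w, hwu, hw⟩ := G.exists_strictCornersIn_not_isStrictCorner hcorner
    refine ⟨w, ?_, ?_⟩
    · rw [G.GkSet_succ_eq_lvl hnc]
      exact ⟨hwu.1, hw⟩
    · rwa [G.GkSet_succ_eq_lvl hnc]

lemma Fk_succ_subset_lvl (c : V) (k : ℕ) : G.Fk (k + 1) c ⊆ G.lvl k := by
  cases k with
  | zero => exact Set.subset_univ _
  | succ k => exact Set.iUnion₂_subset fun u _ => G.fk_subset_lvl k u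

lemma Fk_succ_nonempty [Finite V] (hnc : ∀ m, ¬ G.IsCliqueSet (G.lvl m)) (c : V) (k : ℕ) :
    (G.Fk (k + 1) c).Nonempty := by
  induction k with
  | zero => exact Set.singleton_nonempty c
  | succ k ih =>
    obtain ⟨u, hu⟩ := ih
    obtain ⟨w, hw⟩ := G.fk_nonempty_s11 hnc (G.Fk_succ_subset_lvl c k hu)
    exact ⟨w, Set.mem_biUnion hu hw⟩

lemma cr_eq_top_of_mem_GkSet_gammaMax_succ [Finite V] {v : V}
    (hv : v ∈ G.GkSet (G.gammaMax + 1)) : G.cr v = ⊤ := by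
  by_contra hfin
  obtain ⟨n, hn⟩ := ENat.ne_top_iff_exists.mp hfin
  have hbdd : BddAbove {n : ℕ | ∃ v, G.cr v = n} := by
    refine ((Set.finite_range fun v => (G.cr v).toNat).subset ?_).bddAbove
    rintro _ ⟨w, hw⟩
    exact ⟨w, by simp [hw]⟩
  have hn_le : n ≤ G.gammaMax := le_csSup hbdd ⟨v, hn.symm⟩
  have hv' : ((G.gammaMax + 1 : ℕ) : ℕ∞) ≤ n := hn ▸ hv
  norm_cast at hv'
  omega

lemma exists_cr_eq_top_not_adj [Finite V] {c : V} (hc : G.cr c = ⊤) :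
    ∃ r, G.cr r = ⊤ ∧ ¬ G.Adj c r := by
  have hnc := G.not_isCliqueSet_lvl hc
  obtain ⟨K, hK⟩ := WellFoundedLT.antitone_chain_condition G.lvl_antitone
  have hcore : ∀ v, G.cr v = ⊤ ↔ v ∈ G.lvl K := fun v => by
    refine ⟨fun hv => G.GkSet_succ_subset_lvl K (by simp [GkSet, hv]), fun hv => ?_⟩
    refine ENat.eq_top_iff_forall_ge.mpr fun m => ?_
    have hvm : v ∈ G.lvl m :=
      (le_total m K).elim (fun h => G.lvl_antitone h hv) (fun h => hK m h ▸ hv)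
    exact (Nat.cast_le.mpr m.le_succ).trans (G.lvl_subset_GkSet_succ hnc m hvm)
  by_contra! hadj
  obtain ⟨u, hu, w, hw, huw⟩ : ∃ u ∈ G.lvl K, ∃ w ∈ G.lvl K, ¬ G.Adj u w := by
    simpa [IsCliqueSet] using hnc K
  have hu' : u ∈ G.lvl (K + 1) := hK (K + 1) K.le_succ ▸ hu
  exact hu'.2 ⟨c, (hcore c).1 hc, hu, fun x hx _ => hadj x ((hcore x).2 hx),
    w, hw, hadj w ((hcore w).2 hw), huw⟩

end RefGraph

theorem proj_safe_start_infinite_rank_general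
    {V : Type*} [Fintype V] (G : RefGraph V)
    (hα : G.crGraph = ⊤) :
    ∀ c : V, ∃ r : V, G.cr r = ⊤ ∧ ∃ c' ∈ G.Finf c, ¬ G.Adj c' r := by
  intro c
  obtain ⟨v, hv⟩ := G.exists_cr_eq_top hα
  have hnc := G.not_isCliqueSet_lvl hv
  obtain ⟨c', hc'⟩ := G.Fk_succ_nonempty hnc c G.gammaMax
  have hc'top : G.cr c' = ⊤ := G.cr_eq_top_of_mem_GkSet_gammaMax_succ
    (G.lvl_subset_GkSet_succ hnc _ (G.Fk_succ_subset_lvl c _ hc'))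
  obtain ⟨r, hr, hc'r⟩ := G.exists_cr_eq_top_not_adj hc'top
  exact ⟨r, hr, c', hc', hc'r⟩

/-- If `G` has corner rank `∞`, then for every cop position `c`
there is an `∞`-proj-safe vertex: some `r` with `cr(r) = ∞` and some
`c' ∈ F_∞(c)` not adjacent to `r`. -/
theorem proj_safe_start_infinite_rank
    {V : Type*} [Fintype V] [Nonempty V] (G : RefGraph V)
    (hα : G.crGraph = ⊤) :
    ∀ c : V, ∃ r : V, G.cr r = ⊤ ∧ ∃ c' ∈ G.Finf c, ¬ G.Adj c' r :=
  proj_safe_start_infinite_rank_general G hα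
end
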